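/- arXiv:2111.03004 — 2 statements merged into one kernel-verified Lean document; each statement's English description precedes it below -/
import Mathlib

section
/- Let F be a field, N ⊂ SL₂(F) the subgroup of upper unitriangular matrices, and let g, g' ∈ SL₂(F) have nonzero lower-left entries c, c'. Then N g N = N g' N if and only if c = c'. -/
open Matrix

/-- For `g, g' ∈ SL₂(F)` with nonzero lower-left entries, the `N`-double cosets
`NgN` and `Ng'N` (with `N` the upper unitriangular subgroup) coincide if and
only if the lower-left entries agree. -/
theorem stmt8 (F : Type*) [Field F] (g g' : Matrix (Fin 2) (Fin 2) F)
    (hg : g.det = 1) (hg' : g'.det = 1)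
    (hc : g 1 0 ≠ 0) (hc' : g' 1 0 ≠ 0) :
    (∃ x y : F, !![1, x; 0, 1] * g * !![1, y; 0, 1] = g') ↔ g 1 0 = g' 1 0 := by
  rw [Matrix.det_fin_two] at hg hg'
  constructor
  · rintro ⟨x, y, h⟩
    have := congrArg (fun m => m 1 0) h
    simpa [Matrix.mul_apply, Fin.sum_univ_two, Matrix.vecMul, Matrix.vecHead, Matrix.vecTail,
      dotProduct] using this
  · intro h
    refine ⟨(g' 0 0 - g 0 0) / g 1 0, (g' 1 1 - g 1 1) / g 1 0, ?_⟩
    ext i j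
    fin_cases i <;> fin_cases j <;>
      simp [Matrix.mul_apply, Fin.sum_univ_two, Matrix.vecMul, Matrix.vecHead,
        Matrix.vecTail, dotProduct, h] <;> field_simp
    · ring
    · linear_combination hg' - hg - g 0 1 * h
    · ring
end

section
/- Let F be a field, and let t₀, t₁, ξ ∈ F satisfy t₀² − ξ t₁² = 1 and t₁ ≠ 0, with 2 invertible in F. Then [[t₀, (ξ/4)·2t₁],[2t₁, t₀]] = [[1, t₀/(2t₁)],[0,1]] · [[0, −(2t₁)⁻¹],[2t₁, 0]] · [[1, t₀/(2t₁)],[0,1]] in SL₂(F). -/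
open Matrix

/-- Bruhat factorization of the image of the point `(t₀,t₁,ξ)` of the regular
centralizer group scheme under the map to `SL₂` given by the Kostant section. -/
theorem stmt10 (F : Type*) [Field F] (h2 : (2 : F) ≠ 0)
    (t₀ t₁ ξ : F) (hJ : t₀ ^ 2 - ξ * t₁ ^ 2 = 1) (ht₁ : t₁ ≠ 0) :
    !![t₀, ξ / 4 * (2 * t₁); 2 * t₁, t₀] =
      !![1, t₀ / (2 * t₁); 0, 1] * !![(0 : F), -(2 * t₁)⁻¹; 2 * t₁, 0] *
        !![1, t₀ / (2 * t₁); 0, 1] := by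
  have h4 : (4 : F) ≠ 0 := by
    have : (4 : F) = 2 * 2 := by norm_num
    rw [this]; exact mul_ne_zero h2 h2
  ext i j
  fin_cases i <;> fin_cases j <;>
    simp [Matrix.mul_apply, Fin.sum_univ_succ] <;>
    (field_simp <;> ring_nf <;> try linear_combination (-8*t₁)*hJ) <;>
    linear_combination (-4)*hJ
end
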